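/- Let Γ be a weighted congestion game fulfilling Conditions 1–2, Γ̂ its Ψ̂-game, ε ∈ (0,1) a constant, and S^(0) an arbitrary initial profile. Let a_min⁺ = min{a_{e,k} : e ∈ 𝔼, 0 ≤ k ≤ d, a_{e,k} > 0}, let Φ̂_min be the minimum of Φ̂ over all profiles, and let ĉ_max = max over all profiles S and players u of ĉ_u(S). Then every run of Algorithm 1 from S^(0) reaches a 1/(1−ε)-approximate pure Nash equilibrium of Γ̂ within at most (Φ̂(S^(0)) − Φ̂_min)/(ε·a_min⁺) ≤ N·ĉ_max/(ε·a_min⁺) iterations; i.e., if S^(0), …, S^(T) is a run in which S^(t) is not a 1/(1−ε)-approximate pure Nash equilibrium of Γ̂ for all t < T, then T ≤ (Φ̂(S^(0)) − Φ̂_min)/(ε·a_min⁺). -/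

import Mathlib

/-- `hpoly k l` is the complete homogeneous symmetric polynomial of degree `k`
evaluated at the entries of the list `l`, i.e. the sum of all monomials of
total degree `k` in the elements of `l`. -/
noncomputable def hpoly : ℕ → List ℝ → ℝ
  | 0, _ => 1
  | _ + 1, [] => 0
  | k + 1, a :: l => a * hpoly k (a :: l) + hpoly (k + 1) l
termination_by k l => (k, l.length)

/-- The `k`-order `Ψ̂`-function of a multiset `M` of reals:
`Ψ̂_k(M) = k! ·` (sum of all monomials of total degree `k` in the elements of `M`).
In particular `Ψ̂_0(M) = 1` and `Ψ̂_k(∅) = 0` for `k ≥ 1`. -/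
noncomputable def psiHat (k : ℕ) (M : Multiset ℝ) : ℝ :=
  (Nat.factorial k : ℝ) * hpoly k M.toList

/-- A weighted congestion game with `N` players, `E` resources, polynomial latency
functions of degree at most `d` (Condition 2, with coefficient-ratio bound `A`),
and players' weights in `[1, W]` (Condition 1). -/
structure WCGame (N E d : ℕ) (W A : ℝ) where
  /-- the strategy set of each player: a set of nonempty subsets of resources -/
  strat : Fin N → Set (Finset (Fin E))
  strat_nonempty : ∀ u, (strat u).Nonempty
  strat_valid : ∀ u, ∀ s ∈ strat u, s.Nonempty
  /-- the weight of each player -/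
  w : Fin N → ℝ
  /-- `a e k` is the coefficient of `x^k` in the latency function of resource `e` -/
  a : Fin E → ℕ → ℝ
  hd : 1 ≤ d
  hW : 1 ≤ W
  hw_lower : ∀ u, 1 ≤ w u
  hw_upper : ∀ u, w u ≤ W
  ha_nonneg : ∀ e k, 0 ≤ a e k
  ha_pos : ∀ e, 0 < ∑ k ∈ Finset.range (d + 1), a e k
  hA_pos : 0 < A
  hA_bound : ∀ e e' k k', k ≤ d → k' ≤ d → 0 < a e k → a e' k' ≤ A * a e k

namespace WCGame

/-- A (pure strategy) profile: a choice of a set of resources for every player. -/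
abbrev Profile (N E : ℕ) := Fin N → Finset (Fin E)

variable {N E d : ℕ} {W A : ℝ}

/-- A profile is feasible if every player uses one of her strategies. -/
def IsProfile (G : WCGame N E d W A) (S : Profile N E) : Prop :=
  ∀ u, S u ∈ G.strat u

/-- `U_e(S)`: the multiset of weights of the players using resource `e` in profile `S`. -/
noncomputable def load (G : WCGame N E d W A) (S : Profile N E) (e : Fin E) : Multiset ℝ :=
  (Finset.univ.filter (fun u => e ∈ S u)).val.map G.w

/-- The cost `c_u(S) = w_u · ∑_{e ∈ s_u} ∑_{k=0}^d a_{e,k} · L(U_e(S))^k` of player `u`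
in the original game `Γ`. -/
noncomputable def cost (G : WCGame N E d W A) (S : Profile N E) (u : Fin N) : ℝ :=
  G.w u * ∑ e ∈ S u, ∑ k ∈ Finset.range (d + 1), G.a e k * (G.load S e).sum ^ k

/-- The cost `ĉ_u(S) = w_u · ∑_{e ∈ s_u} ∑_{k=0}^d a_{e,k} · Ψ̂_k(U_e(S))` of player `u`
in the `Ψ̂`-game `Γ̂`. -/
noncomputable def hcost (G : WCGame N E d W A) (S : Profile N E) (u : Fin N) : ℝ :=
  G.w u * ∑ e ∈ S u, ∑ k ∈ Finset.range (d + 1), G.a e k * psiHat k (G.load S e)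

/-- The potential function `Φ̂(S) = ∑_e ∑_{k=0}^d (a_{e,k}/(k+1)) · Ψ̂_{k+1}(U_e(S))`
of the `Ψ̂`-game. -/
noncomputable def potHat (G : WCGame N E d W A) (S : Profile N E) : ℝ :=
  ∑ e : Fin E, ∑ k ∈ Finset.range (d + 1),
    G.a e k / ((k : ℝ) + 1) * psiHat (k + 1) (G.load S e)

/-- The approximate potential function `Φ(S) = ∑_e Ψ_e(L(U_e(S)))` with
`Ψ_e(x) = a_{e,0}·x + ∑_{k=1}^d a_{e,k}·(x^{k+1}/(k+1) + x^k/2)`. -/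
noncomputable def pot (G : WCGame N E d W A) (S : Profile N E) : ℝ :=
  ∑ e : Fin E,
    (G.a e 0 * (G.load S e).sum +
      ∑ k ∈ Finset.Icc 1 d,
        G.a e k * ((G.load S e).sum ^ (k + 1) / ((k : ℝ) + 1) + (G.load S e).sum ^ k / 2))

/-- `S` is a `ρ`-approximate pure Nash equilibrium w.r.t. the player costs `costFn`:
no player can decrease her cost by more than a factor `ρ` by a unilateral deviation. -/
def IsApproxPNE (G : WCGame N E d W A) (costFn : Profile N E → Fin N → ℝ) (ρ : ℝ)
    (S : Profile N E) : Prop :=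
  ∀ u, ∀ s' ∈ G.strat u, costFn S u ≤ ρ * costFn (Function.update S u s') u

/-- `sstar u` is a best response of player `u` to `S₋ᵤ` w.r.t. the costs `costFn`. -/
def IsBestResponses (G : WCGame N E d W A) (costFn : Profile N E → Fin N → ℝ)
    (S : Profile N E) (sstar : Fin N → Finset (Fin E)) : Prop :=
  ∀ u, sstar u ∈ G.strat u ∧
    ∀ s ∈ G.strat u, costFn (Function.update S u (sstar u)) u ≤ costFn (Function.update S u s) u

/-- One step of Algorithm 1 (the `1/(1-ε)` best response dynamic on the `Ψ̂`-game),
moving from profile `S` to profile `S'` by letting the chosen player `ut` (a player with a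
`1/(1-ε)`-move of maximum cost reduction) switch to her best response `sstar ut`. -/
def AlgOneStep (G : WCGame N E d W A) (ε : ℝ) (S S' : Profile N E) (ut : Fin N)
    (sstar : Fin N → Finset (Fin E)) : Prop :=
  G.IsBestResponses G.hcost S sstar ∧
  G.hcost S ut > (1 / (1 - ε)) * G.hcost (Function.update S ut (sstar ut)) ut ∧
  (∀ u, G.hcost S u > (1 / (1 - ε)) * G.hcost (Function.update S u (sstar u)) u →
    G.hcost S ut - G.hcost (Function.update S ut (sstar ut)) ut ≥
      G.hcost S u - G.hcost (Function.update S u (sstar u)) u) ∧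
  S' = Function.update S ut (sstar ut)

/-- One step of Algorithm 2 (the refined `ρ/(1-ε)` best response dynamic on `Γ`),
moving from profile `S` to profile `S'` by letting the chosen player `ut` (a player
maximizing `c_u(S) - ρ·c_u(s_u^*, S₋ᵤ)` among players with `ρ/(1-ε)`-moves) switch to
her best response `sstar ut`. -/
def AlgTwoStep (G : WCGame N E d W A) (ρ ε : ℝ) (S S' : Profile N E) (ut : Fin N)
    (sstar : Fin N → Finset (Fin E)) : Prop :=
  G.IsBestResponses G.cost S sstar ∧
  G.cost S ut > (ρ / (1 - ε)) * G.cost (Function.update S ut (sstar ut)) ut ∧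
  (∀ u, G.cost S u > (ρ / (1 - ε)) * G.cost (Function.update S u (sstar u)) u →
    G.cost S ut - ρ * G.cost (Function.update S ut (sstar ut)) ut ≥
      G.cost S u - ρ * G.cost (Function.update S u (sstar u)) u) ∧
  S' = Function.update S ut (sstar ut)

/-- `c_max`: the maximum cost of a player over all (feasible) profiles in `Γ`. -/
noncomputable def cMax (G : WCGame N E d W A) : ℝ :=
  sSup {x | ∃ S u, G.IsProfile S ∧ x = G.cost S u}

/-- `ĉ_max`: the maximum cost of a player over all (feasible) profiles in `Γ̂`. -/
noncomputable def hcMax (G : WCGame N E d W A) : ℝ :=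
  sSup {x | ∃ S u, G.IsProfile S ∧ x = G.hcost S u}

/-- `Φ̂_min`: the minimum of the potential `Φ̂` over all (feasible) profiles. -/
noncomputable def potHatMin (G : WCGame N E d W A) : ℝ :=
  sInf {x | ∃ S, G.IsProfile S ∧ x = G.potHat S}

/-- `a_min⁺`: the minimum positive coefficient of the latency functions. -/
noncomputable def aMinPos (G : WCGame N E d W A) : ℝ :=
  sInf {x | 0 < x ∧ ∃ e k, k ≤ d ∧ x = G.a e k}

end WCGame

/-!
`Φ̂` is an exact potential of `Γ̂`: since
`Ψ̂_{k+1}(x ∪ M) - Ψ̂_{k+1}(M) = (k+1)·x·Ψ̂_k(x ∪ M)`, withdrawing player `u` from a profile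
lowers `Φ̂` by exactly `ĉ_u`. A step of Algorithm 1 moves a player who saves more than an
`ε`-fraction of her cost, so `Φ̂` drops by more than `ε·ĉ_{u_t} ≥ ε·a_min⁺` (strategies are
nonempty and `Ψ̂_k ≥ 1` on loads of weights `≥ 1`). Finally `0 ≤ Φ̂_min`, and
`Ψ̂_{k+1}(M) ≤ (k+1)·(∑ M)·Ψ̂_k(M)` with double counting gives `Φ̂(S) ≤ ∑_u ĉ_u(S) ≤ N·ĉ_max`.
-/

theorem hpoly_cons (k : ℕ) (a : ℝ) (l : List ℝ) :
    hpoly (k + 1) (a :: l) = a * hpoly k (a :: l) + hpoly (k + 1) l := by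
  rw [hpoly]

theorem hpoly_swap (x y : ℝ) (l : List ℝ) :
    ∀ k, hpoly k (x :: y :: l) = hpoly k (y :: x :: l)
  | 0 => by simp [hpoly]
  | 1 => by simp only [hpoly]; ring
  | k + 2 => by
    have h₀ := hpoly_swap x y l k
    have h₁ := hpoly_swap x y l (k + 1)
    have e₁ := hpoly_cons k x (y :: l)
    have e₂ := hpoly_cons k y (x :: l)
    rw [hpoly_cons (k + 1) x (y :: l), hpoly_cons (k + 1) y (x :: l), hpoly_cons (k + 1) x l,
      hpoly_cons (k + 1) y l]
    linear_combination (x + y) * h₁ - x * y * h₀ - y * e₁ + x * e₂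

theorem hpoly_perm {l₁ l₂ : List ℝ} (h : l₁.Perm l₂) (k : ℕ) : hpoly k l₁ = hpoly k l₂ := by
  induction h generalizing k with
  | nil => rfl
  | @cons a l₁ l₂ _ ih =>
    induction k with
    | zero => simp [hpoly]
    | succ k ihk => rw [hpoly_cons, hpoly_cons, ihk, ih]
  | swap x y l => exact hpoly_swap y x l k
  | trans _ _ ih₁ ih₂ => rw [ih₁, ih₂]

-- `psiHat` reads its multiset through `Multiset.toList`, whose order is unspecified.
theorem psiHat_coe (k : ℕ) (l : List ℝ) : psiHat k l = k.factorial * hpoly k l := by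
  rw [psiHat, hpoly_perm (Multiset.coe_eq_coe.mp (Multiset.coe_toList _))]

@[simp]
theorem psiHat_zero (M : Multiset ℝ) : psiHat 0 M = 1 := by
  simp [psiHat, hpoly]

@[simp]
theorem psiHat_succ_empty (k : ℕ) : psiHat (k + 1) 0 = 0 := by
  simp [psiHat, hpoly]

theorem psiHat_succ_cons (k : ℕ) (x : ℝ) (M : Multiset ℝ) :
    psiHat (k + 1) (x ::ₘ M) = (k + 1) * x * psiHat k (x ::ₘ M) + psiHat (k + 1) M := by
  rw [← Multiset.coe_toList M, Multiset.cons_coe, psiHat_coe, psiHat_coe, psiHat_coe,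
    hpoly_cons, Nat.factorial_succ]
  push_cast
  ring

theorem psiHat_nonneg {M : Multiset ℝ} (hM : ∀ x ∈ M, 0 ≤ x) (k : ℕ) : 0 ≤ psiHat k M := by
  induction M using Multiset.induction_on generalizing k with
  | empty => cases k <;> simp
  | cons x M ih =>
    have hx : 0 ≤ x := hM x (Multiset.mem_cons_self x M)
    have ih := ih fun y hy => hM y (Multiset.mem_cons_of_mem hy)
    induction k with
    | zero => simp
    | succ k ihk =>
      rw [psiHat_succ_cons]
      have := ih (k + 1)
      positivity

theorem psiHat_le_psiHat_cons {x : ℝ} {M : Multiset ℝ} (hM : ∀ y ∈ x ::ₘ M, 0 ≤ y) (k : ℕ) :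
    psiHat k M ≤ psiHat k (x ::ₘ M) := by
  cases k with
  | zero => simp
  | succ k =>
    have hx : 0 ≤ x := hM x (Multiset.mem_cons_self x M)
    have := psiHat_nonneg hM k
    rw [psiHat_succ_cons]
    nlinarith [mul_nonneg hx this]

theorem one_le_psiHat_cons {x : ℝ} {M : Multiset ℝ} (hM : ∀ y ∈ x ::ₘ M, 1 ≤ y) (k : ℕ) :
    1 ≤ psiHat k (x ::ₘ M) := by
  induction k with
  | zero => simp
  | succ k ih =>
    have hx : 1 ≤ x := hM x (Multiset.mem_cons_self x M)
    have := psiHat_nonneg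
      (fun y hy => zero_le_one.trans (hM y (Multiset.mem_cons_of_mem hy))) (k + 1)
    rw [psiHat_succ_cons]
    nlinarith [mul_le_mul hx ih zero_le_one (by linarith)]

theorem psiHat_succ_le {M : Multiset ℝ} (hM : ∀ x ∈ M, 0 ≤ x) (k : ℕ) :
    psiHat (k + 1) M ≤ (k + 1) * M.sum * psiHat k M := by
  induction M using Multiset.induction_on with
  | empty => simp
  | cons x M ih =>
    have hM' : ∀ y ∈ M, 0 ≤ y := fun y hy => hM y (Multiset.mem_cons_of_mem hy)
    have hmono := psiHat_le_psiHat_cons hM k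
    have hsum : 0 ≤ M.sum := Multiset.sum_nonneg hM'
    rw [psiHat_succ_cons, Multiset.sum_cons]
    have hcoef : (0 : ℝ) ≤ (k + 1) * M.sum := by positivity
    nlinarith [ih hM', mul_le_mul_of_nonneg_left hmono hcoef]

namespace WCGame

variable {N E d : ℕ} {W A : ℝ} (G : WCGame N E d W A)

-- `ĉ_e` and the `e`-summand of `Φ̂`, as functions of the load of `e`.
noncomputable def latHat (e : Fin E) (M : Multiset ℝ) : ℝ :=
  ∑ k ∈ Finset.range (d + 1), G.a e k * psiHat k M

noncomputable def potHatTerm (e : Fin E) (M : Multiset ℝ) : ℝ :=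
  ∑ k ∈ Finset.range (d + 1), G.a e k / ((k : ℝ) + 1) * psiHat (k + 1) M

theorem hcost_eq_latHat (S : Profile N E) (u : Fin N) :
    G.hcost S u = G.w u * ∑ e ∈ S u, G.latHat e (G.load S e) := rfl

theorem potHat_eq_potHatTerm (S : Profile N E) :
    G.potHat S = ∑ e, G.potHatTerm e (G.load S e) := rfl

theorem potHatTerm_cons_sub (e : Fin E) (x : ℝ) (M : Multiset ℝ) :
    G.potHatTerm e (x ::ₘ M) - G.potHatTerm e M = x * G.latHat e (x ::ₘ M) := by
  rw [potHatTerm, potHatTerm, latHat, ← Finset.sum_sub_distrib, Finset.mul_sum]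
  refine Finset.sum_congr rfl fun k _ => ?_
  rw [psiHat_succ_cons]
  field_simp
  ring

theorem latHat_nonneg (e : Fin E) {M : Multiset ℝ} (hM : ∀ x ∈ M, 0 ≤ x) :
    0 ≤ G.latHat e M :=
  Finset.sum_nonneg fun k _ => mul_nonneg (G.ha_nonneg e k) (psiHat_nonneg hM k)

theorem potHatTerm_le (e : Fin E) {M : Multiset ℝ} (hM : ∀ x ∈ M, 0 ≤ x) :
    G.potHatTerm e M ≤ M.sum * G.latHat e M := by
  rw [potHatTerm, latHat, Finset.mul_sum]
  refine Finset.sum_le_sum fun k _ => ?_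
  calc G.a e k / ((k : ℝ) + 1) * psiHat (k + 1) M
      ≤ G.a e k / ((k : ℝ) + 1) * ((k + 1) * M.sum * psiHat k M) :=
        mul_le_mul_of_nonneg_left (psiHat_succ_le hM k) (by have := G.ha_nonneg e k; positivity)
    _ = M.sum * (G.a e k * psiHat k M) := by field_simp

theorem mem_load {S : Profile N E} {e : Fin E} {x : ℝ} :
    x ∈ G.load S e ↔ ∃ u, e ∈ S u ∧ G.w u = x := by
  simp [load]

theorem one_le_of_mem_load {S : Profile N E} {e : Fin E} {x : ℝ} (hx : x ∈ G.load S e) :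
    1 ≤ x := by
  obtain ⟨u, -, rfl⟩ := G.mem_load.1 hx
  exact G.hw_lower u

theorem nonneg_of_mem_load {S : Profile N E} {e : Fin E} {x : ℝ} (hx : x ∈ G.load S e) :
    0 ≤ x :=
  zero_le_one.trans (G.one_le_of_mem_load hx)

theorem load_eq_cons_load_update_empty {S : Profile N E} {u : Fin N} {e : Fin E}
    (he : e ∈ S u) :
    G.load S e = G.w u ::ₘ G.load (Function.update S u ∅) e := by
  have hfilter : Finset.univ.filter (fun v => e ∈ Function.update S u ∅ v) =
      (Finset.univ.filter (fun v => e ∈ S v)).erase u := by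
    ext v
    rcases eq_or_ne v u with rfl | hv <;> simp [*]
  rw [load, load, hfilter, ← Multiset.map_cons, ← Finset.insert_val_of_notMem
    (Finset.notMem_erase u _), Finset.insert_erase (by simpa using he)]

theorem load_update_empty_of_notMem {S : Profile N E} {u : Fin N} {e : Fin E}
    (he : e ∉ S u) :
    G.load (Function.update S u ∅) e = G.load S e := by
  unfold load
  congr 2
  ext v
  rcases eq_or_ne v u with rfl | hv <;> simp [*]

theorem potHat_sub_potHat_update_empty (S : Profile N E) (u : Fin N) :
    G.potHat S - G.potHat (Function.update S u ∅) = G.hcost S u := by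
  rw [potHat_eq_potHatTerm, potHat_eq_potHatTerm, hcost_eq_latHat, ← Finset.sum_sub_distrib,
    Finset.mul_sum, ← Finset.sum_subset (Finset.subset_univ (S u))]
  · refine Finset.sum_congr rfl fun e he => ?_
    rw [G.load_eq_cons_load_update_empty he, potHatTerm_cons_sub]
  · intro e _ he
    rw [G.load_update_empty_of_notMem he, sub_self]

theorem potHat_sub_potHat_update (S : Profile N E) (u : Fin N) (s : Finset (Fin E)) :
    G.potHat S - G.potHat (Function.update S u s) =
      G.hcost S u - G.hcost (Function.update S u s) u := by
  rw [← G.potHat_sub_potHat_update_empty S u,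
    ← G.potHat_sub_potHat_update_empty (Function.update S u s) u, Function.update_idem]
  ring

theorem potHat_nonneg (S : Profile N E) : 0 ≤ G.potHat S :=
  Finset.sum_nonneg fun e _ => Finset.sum_nonneg fun k _ =>
    mul_nonneg (div_nonneg (G.ha_nonneg e k) (by positivity))
      (psiHat_nonneg (fun _ => G.nonneg_of_mem_load) _)

theorem sum_load_sum_mul (S : Profile N E) (f : Fin E → ℝ) :
    ∑ e, (G.load S e).sum * f e = ∑ u, G.w u * ∑ e ∈ S u, f e := by
  simp only [load, Finset.sum_map_val, Finset.sum_mul, Finset.mul_sum]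
  exact Finset.sum_comm' fun e u => by simp

theorem potHat_le_sum_hcost (S : Profile N E) : G.potHat S ≤ ∑ u, G.hcost S u :=
  (Finset.sum_le_sum fun e _ => G.potHatTerm_le e fun _ => G.nonneg_of_mem_load).trans_eq
    (G.sum_load_sum_mul S _)

theorem exists_coeff_pos (e : Fin E) : ∃ k ≤ d, 0 < G.a e k := by
  obtain ⟨k, hk, hpos⟩ := Finset.exists_lt_of_sum_lt (f := fun _ => (0 : ℝ))
    (by simpa using G.ha_pos e)
  exact ⟨k, Nat.lt_succ_iff.mp (Finset.mem_range.mp hk), hpos⟩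

theorem aMinPos_nonneg : 0 ≤ G.aMinPos :=
  Real.sInf_nonneg fun _ hx => hx.1.le

theorem aMinPos_le {e : Fin E} {k : ℕ} (hk : k ≤ d) (ha : 0 < G.a e k) :
    G.aMinPos ≤ G.a e k :=
  csInf_le ⟨0, fun _ hx => hx.1.le⟩ ⟨ha, e, k, hk, rfl⟩

theorem aMinPos_pos (hE : 0 < E) : 0 < G.aMinPos := by
  obtain ⟨k, hk, ha⟩ := G.exists_coeff_pos ⟨0, hE⟩
  have hfin : {x | 0 < x ∧ ∃ e, ∃ k ≤ d, x = G.a e k}.Finite :=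
    (Set.finite_range fun p : Fin E × Fin (d + 1) => G.a p.1 p.2).subset <| by
      rintro _ ⟨-, e, k, hk, rfl⟩
      exact ⟨(e, ⟨k, Nat.lt_succ_of_le hk⟩), rfl⟩
  refine (Set.Nonempty.csInf_mem ?_ hfin).1
  exact ⟨G.a ⟨0, hE⟩ k, ha, ⟨0, hE⟩, k, hk, rfl⟩

theorem aMinPos_le_hcost {S : Profile N E} (hS : G.IsProfile S) (u : Fin N) :
    G.aMinPos ≤ G.hcost S u := by
  obtain ⟨e, he⟩ := G.strat_valid u (S u) (hS u)
  obtain ⟨k, hk, ha⟩ := G.exists_coeff_pos e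
  have hload := G.load_eq_cons_load_update_empty he
  have hψ : 1 ≤ psiHat k (G.load S e) := by
    rw [hload]
    exact one_le_psiHat_cons (fun _ hx => G.one_le_of_mem_load (hload ▸ hx)) k
  have hlat_nonneg (e : Fin E) : 0 ≤ G.latHat e (G.load S e) :=
    G.latHat_nonneg e fun _ => G.nonneg_of_mem_load
  have hlat : G.a e k * psiHat k (G.load S e) ≤ G.latHat e (G.load S e) :=
    Finset.single_le_sum (f := fun k => G.a e k * psiHat k (G.load S e))
      (fun j _ => mul_nonneg (G.ha_nonneg e j) (psiHat_nonneg (fun _ => G.nonneg_of_mem_load) j))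
      (Finset.mem_range_succ_iff.mpr hk)
  have hsum : G.latHat e (G.load S e) ≤ ∑ e ∈ S u, G.latHat e (G.load S e) :=
    Finset.single_le_sum (f := fun e => G.latHat e (G.load S e)) (fun e _ => hlat_nonneg e) he
  calc G.aMinPos ≤ G.a e k := G.aMinPos_le hk ha
    _ ≤ G.a e k * psiHat k (G.load S e) := le_mul_of_one_le_right (G.ha_nonneg e k) hψ
    _ ≤ ∑ e ∈ S u, G.latHat e (G.load S e) := hlat.trans hsum
    _ ≤ G.hcost S u := le_mul_of_one_le_left ((hlat_nonneg e).trans hsum) (G.hw_lower u)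

theorem hcost_le_hcMax {S : Profile N E} (hS : G.IsProfile S) (u : Fin N) :
    G.hcost S u ≤ G.hcMax := by
  refine le_csSup (Set.Finite.bddAbove <|
    (Set.finite_range fun p : Profile N E × Fin N => G.hcost p.1 p.2).subset ?_) ⟨S, u, hS, rfl⟩
  rintro _ ⟨S', u', -, rfl⟩
  exact ⟨(S', u'), rfl⟩

theorem sum_hcost_le_card_mul_hcMax {S : Profile N E} (hS : G.IsProfile S) :
    ∑ u, G.hcost S u ≤ N * G.hcMax := by
  simpa using Finset.sum_le_sum fun u (_ : u ∈ Finset.univ) => G.hcost_le_hcMax hS u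

theorem potHatMin_le_potHat {S : Profile N E} (hS : G.IsProfile S) :
    G.potHatMin ≤ G.potHat S :=
  csInf_le ⟨0, by rintro _ ⟨S', -, rfl⟩; exact G.potHat_nonneg S'⟩ ⟨S, hS, rfl⟩

theorem potHatMin_nonneg {S : Profile N E} (hS : G.IsProfile S) : 0 ≤ G.potHatMin :=
  le_csInf ⟨_, S, hS, rfl⟩ (by rintro _ ⟨S', -, rfl⟩; exact G.potHat_nonneg S')

def AlgOneRun (ε : ℝ) (Srun : ℕ → Profile N E) (T : ℕ) : Prop :=
  ∀ t < T, ∃ ut sstar, G.AlgOneStep ε (Srun t) (Srun (t + 1)) ut sstar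

variable {G} {ε : ℝ} {S S' : Profile N E} {ut : Fin N} {sstar : Fin N → Finset (Fin E)}

theorem AlgOneStep.isProfile (h : G.AlgOneStep ε S S' ut sstar) (hS : G.IsProfile S) :
    G.IsProfile S' := by
  obtain ⟨hbr, -, -, rfl⟩ := h
  intro v
  rcases eq_or_ne v ut with rfl | hv
  · simpa using (hbr v).1
  · simpa [hv] using hS v

theorem AlgOneStep.mul_aMinPos_le_potHat_sub (hε0 : 0 ≤ ε) (hε1 : ε < 1)
    (h : G.AlgOneStep ε S S' ut sstar) (hS : G.IsProfile S) :
    ε * G.aMinPos ≤ G.potHat S - G.potHat S' := by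
  obtain ⟨-, hmove, -, rfl⟩ := h
  rw [one_div, gt_iff_lt, inv_mul_lt_iff₀ (sub_pos.2 hε1)] at hmove
  calc ε * G.aMinPos ≤ ε * G.hcost S ut := mul_le_mul_of_nonneg_left (G.aMinPos_le_hcost hS ut) hε0
    _ ≤ _ := by rw [G.potHat_sub_potHat_update]; linarith

variable {Srun : ℕ → Profile N E} {T : ℕ}

theorem AlgOneRun.isProfile (hrun : G.AlgOneRun ε Srun T) (h0 : G.IsProfile (Srun 0)) :
    ∀ t ≤ T, G.IsProfile (Srun t)
  | 0, _ => h0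
  | t + 1, ht => by
    obtain ⟨ut, sstar, hstep⟩ := hrun t ht
    exact hstep.isProfile (hrun.isProfile h0 t (Nat.le_of_succ_le ht))

theorem AlgOneRun.mul_le_potHat_sub (hrun : G.AlgOneRun ε Srun T) (h0 : G.IsProfile (Srun 0))
    (hε0 : 0 ≤ ε) (hε1 : ε < 1) :
    T * (ε * G.aMinPos) ≤ G.potHat (Srun 0) - G.potHat (Srun T) := by
  calc T * (ε * G.aMinPos) = ∑ t ∈ Finset.range T, ε * G.aMinPos := by simp
    _ ≤ ∑ t ∈ Finset.range T, (G.potHat (Srun t) - G.potHat (Srun (t + 1))) := by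
      refine Finset.sum_le_sum fun t ht => ?_
      have ht : t < T := Finset.mem_range.1 ht
      obtain ⟨ut, sstar, hstep⟩ := hrun t ht
      exact hstep.mul_aMinPos_le_potHat_sub hε0 hε1 (hrun.isProfile h0 t ht.le)
    _ = G.potHat (Srun 0) - G.potHat (Srun T) := Finset.sum_range_sub' _ T

end WCGame

open WCGame in
/-- Theorem 2: every run of Algorithm 1 from an initial profile `S⁰` reaches a
`1/(1−ε)`-approximate pure Nash equilibrium of the `Ψ̂`-game `Γ̂` within at most
`(Φ̂(S⁰) − Φ̂_min)/(ε·a_min⁺) ≤ N·ĉ_max/(ε·a_min⁺)` iterations: if `S⁰, …, S^T` is a run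
in which `S^t` is not a `1/(1−ε)`-approximate pure Nash equilibrium of `Γ̂` for all `t < T`,
then `T ≤ (Φ̂(S⁰) − Φ̂_min)/(ε·a_min⁺)`. -/
theorem algOne_runtime_potential_bound {N E d : ℕ} {W A : ℝ}
    (G : WCGame N E d W A) (ε : ℝ) (hε0 : 0 < ε) (hε1 : ε < 1)
    (Srun : ℕ → Profile N E) (T : ℕ) (h0 : G.IsProfile (Srun 0))
    (hrun : ∀ t < T, ¬ G.IsApproxPNE G.hcost (1 / (1 - ε)) (Srun t) ∧
      ∃ ut sstar, G.AlgOneStep ε (Srun t) (Srun (t + 1)) ut sstar) :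
    (T : ℝ) ≤ (G.potHat (Srun 0) - G.potHatMin) / (ε * G.aMinPos) ∧
      (G.potHat (Srun 0) - G.potHatMin) / (ε * G.aMinPos) ≤
        (N : ℝ) * G.hcMax / (ε * G.aMinPos) := by
  have hrun' : G.AlgOneRun ε Srun T := fun t ht => (hrun t ht).2
  have hgap : 0 ≤ G.potHat (Srun 0) - G.potHatMin := sub_nonneg.2 (G.potHatMin_le_potHat h0)
  have hden : 0 ≤ ε * G.aMinPos := mul_nonneg hε0.le G.aMinPos_nonneg
  refine ⟨?_, div_le_div_of_nonneg_right ?_ hden⟩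
  · rcases T.eq_zero_or_pos with rfl | hT
    · simpa using div_nonneg hgap hden
    -- a step is taken, so some resource exists and `aMinPos` is not the junk `sInf ∅ = 0`
    obtain ⟨ut, -⟩ := (hrun 0 hT).2
    obtain ⟨s, hs⟩ := G.strat_nonempty ut
    obtain ⟨e, -⟩ := G.strat_valid ut s hs
    rw [le_div_iff₀ (mul_pos hε0 (G.aMinPos_pos e.pos))]
    linarith [hrun'.mul_le_potHat_sub h0 hε0.le hε1,
      G.potHatMin_le_potHat (hrun'.isProfile h0 T le_rfl)]
  · linarith [G.potHat_le_sum_hcost (Srun 0), G.sum_hcost_le_card_mul_hcMax h0,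
      G.potHatMin_nonneg h0]
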